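/- Fix an integer k ≥ 1, reals γ > 0 and t > 0, an arbitrary x = (x₁,…,x_k) ∈ ℝ^k, and reals r₁, …, r_k with r₁ > 0 and r_{i+1} > r_i + γ² for 1 ≤ i < k. For λ > 0 define F(λ) = (2π)^{−k} ∫_{ℝ^k} Π_{1 ≤ A < B ≤ k} (z_B − z_A)/(z_B − z_A − γ² − γ(z_A + z_B)/λ − z_A z_B/λ²) · Π_{j=1}^{k} [γλ/(γλ + z_j)] · exp(t z_j²/2 − x_j z_j) ds₁ ⋯ ds_k, where z_j = r_j + i s_j. Then for all sufficiently large λ the integrand of F(λ) has nonvanishing denominators and F(λ) is well defined, and lim_{λ → ∞} F(λ) = (2π)^{−k} ∫_{ℝ^k} Π_{1 ≤ A < B ≤ k} (z_B − z_A)/(z_B − z_A − γ²) · Π_{j=1}^{k} exp(t z_j²/2 − x_j z_j) ds₁ ⋯ ds_k. (This is the analytic content of the convergence of the rescaled moment formulas of the uniform Howitt–Warren flow to the moments of the multiplicative-noise stochastic heat equation.) -/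

import Mathlib

open Complex MeasureTheory Filter

/-- `F(λ)`: the rescaled moment formula of the uniform Howitt–Warren flow, with
`z_j = r_j + i s_j` parametrizing vertical lines. -/
noncomputable def F (k : ℕ) (γ t : ℝ) (x r : Fin k → ℝ) (lam : ℝ) : ℂ :=
  (((2 * Real.pi) ^ k : ℝ))⁻¹ *
    ∫ s : Fin k → ℝ,
      (∏ p ∈ Finset.univ.filter (fun p : Fin k × Fin k => p.1 < p.2),
        ((((r p.2 : ℂ) + (s p.2 : ℂ) * Complex.I) - ((r p.1 : ℂ) + (s p.1 : ℂ) * Complex.I)) /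
          ((((r p.2 : ℂ) + (s p.2 : ℂ) * Complex.I) - ((r p.1 : ℂ) + (s p.1 : ℂ) * Complex.I))
            - (γ : ℂ) ^ 2
            - (γ : ℂ) * (((r p.1 : ℂ) + (s p.1 : ℂ) * Complex.I)
                + ((r p.2 : ℂ) + (s p.2 : ℂ) * Complex.I)) / (lam : ℂ)
            - ((r p.1 : ℂ) + (s p.1 : ℂ) * Complex.I)
                * ((r p.2 : ℂ) + (s p.2 : ℂ) * Complex.I) / (lam : ℂ) ^ 2))) *
      ∏ j : Fin k,
        ((γ : ℂ) * (lam : ℂ) / ((γ : ℂ) * (lam : ℂ) + ((r j : ℂ) + (s j : ℂ) * Complex.I))) *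
          Complex.exp ((t : ℂ) * ((r j : ℂ) + (s j : ℂ) * Complex.I) ^ 2 / 2
            - (x j : ℂ) * ((r j : ℂ) + (s j : ℂ) * Complex.I))

/-- The `λ → ∞` limit of `F(λ)`: the moment formula for the multiplicative-noise
stochastic heat equation. -/
noncomputable def G (k : ℕ) (γ t : ℝ) (x r : Fin k → ℝ) : ℂ :=
  (((2 * Real.pi) ^ k : ℝ))⁻¹ *
    ∫ s : Fin k → ℝ,
      (∏ p ∈ Finset.univ.filter (fun p : Fin k × Fin k => p.1 < p.2),
        ((((r p.2 : ℂ) + (s p.2 : ℂ) * Complex.I) - ((r p.1 : ℂ) + (s p.1 : ℂ) * Complex.I)) /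
          ((((r p.2 : ℂ) + (s p.2 : ℂ) * Complex.I) - ((r p.1 : ℂ) + (s p.1 : ℂ) * Complex.I))
            - (γ : ℂ) ^ 2))) *
      ∏ j : Fin k,
        Complex.exp ((t : ℂ) * ((r j : ℂ) + (s j : ℂ) * Complex.I) ^ 2 / 2
          - (x j : ℂ) * ((r j : ℂ) + (s j : ℂ) * Complex.I))
open Topology

/-!
Put `ε = 1/λ` and `z = a + iu`, `w = b + iv`. The pair denominator of `F(λ)` is
`w - z - γ² - εγ(z + w) - ε²zw`; its real part is `c + O(ε) + ε²uv` with `c = b - a - γ² > 0`,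
and when `ε²uv` is very negative its imaginary part, about `v - u` with `u, v` of opposite
signs, is large. So for large `λ` it stays at least `c/4` uniformly in `s`, and likewise
`|γλ/(γλ + z)| ≤ 2`. The integrand of `F(λ)` is then dominated, uniformly in large `λ`, by a
constant times `∏ⱼ exp(C|sⱼ| - t sⱼ²/2)`, and it converges pointwise to that of `G`;
dominated convergence gives the limit.
-/

lemma Fin.add_lt_of_forall_add_lt_succ {α : Type*} [AddCommMonoid α] [PartialOrder α]
    [IsOrderedAddMonoid α] {k : ℕ} {f : Fin k → α} {δ : α} (hδ : 0 ≤ δ)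
    (h : ∀ i : ℕ, ∀ hi : i + 1 < k, f ⟨i, Nat.lt_of_succ_lt hi⟩ + δ < f ⟨i + 1, hi⟩)
    {A B : Fin k} (hAB : A < B) : f A + δ < f B := by
  obtain ⟨a, ha⟩ := A
  obtain ⟨b, hb⟩ := B
  induction b with
  | zero => exact absurd hAB (Nat.not_lt_zero a)
  | succ b ih =>
    obtain rfl | hab : a = b ∨ a < b := by rw [Fin.mk_lt_mk] at hAB; omega
    · exact h a hb
    · exact (ih (Nat.lt_of_succ_lt hb) hab).trans_le
        ((le_add_of_nonneg_right hδ).trans (h b hb).le)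

noncomputable def hwDenom (γ lam : ℝ) (z w : ℂ) : ℂ :=
  w - z - (γ : ℂ) ^ 2 - (γ : ℂ) * (z + w) / (lam : ℂ) - z * w / (lam : ℂ) ^ 2

noncomputable def pairDenom (γ p q : ℝ) (z w : ℂ) : ℂ :=
  w - z - (γ : ℂ) ^ 2 - p * (z + w) - q * (z * w)

lemma hwDenom_eq_pairDenom (γ lam : ℝ) (z w : ℂ) :
    hwDenom γ lam z w = pairDenom γ (lam⁻¹ * γ) (lam⁻¹ ^ 2) z w := by
  simp only [hwDenom, pairDenom]; push_cast; ring

lemma re_pairDenom (γ p q a b u v : ℝ) :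
    (pairDenom γ p q (a + u * I) (b + v * I)).re
      = b - a - γ ^ 2 - p * (a + b) - q * (a * b - u * v) := by
  simp [pairDenom, ← ofReal_pow]

lemma im_pairDenom (γ p q a b u v : ℝ) :
    (pairDenom γ p q (a + u * I) (b + v * I)).im
      = v * (1 - p - q * a) - u * (1 + p + q * b) := by
  simp only [pairDenom, ← ofReal_pow, sub_im, add_im, ofReal_im, mul_im, ofReal_re, I_im,
    mul_one, I_re, mul_zero, add_zero, zero_add, sub_zero, add_re, mul_re, sub_self, zero_mul]
  ring

lemma quarter_le_norm_pairDenom {γ a b p q : ℝ} (hc : 0 < b - a - γ ^ 2) (hq : 0 ≤ q)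
    (hqc : q * (b - a - γ ^ 2) ≤ 4) (hpq : p * (a + b) + q * (a * b) ≤ (b - a - γ ^ 2) / 2)
    (hα : 1 / 2 ≤ 1 - p - q * a) (hβ : 1 / 2 ≤ 1 + p + q * b) (u v : ℝ) :
    (b - a - γ ^ 2) / 4 ≤ ‖pairDenom γ p q (a + u * I) (b + v * I)‖ := by
  set c := b - a - γ ^ 2
  by_cases huv : -(c / 4) ≤ q * (u * v)
  · refine le_trans ?_ (Complex.re_le_norm _)
    rw [re_pairDenom]
    linarith
  · refine le_trans ?_ (Complex.abs_im_le_norm _)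
    rw [im_pairDenom]
    have huv_neg : u * v < 0 := by nlinarith
    have hsum : (|u| + |v|) / 2 ≤ |v * (1 - p - q * a) - u * (1 + p + q * b)| := by
      rcases mul_neg_iff.mp huv_neg with ⟨hu, hv⟩ | ⟨hu, hv⟩
      · rw [abs_of_pos hu, abs_of_neg hv, abs_of_neg (by nlinarith)]; nlinarith
      · rw [abs_of_neg hu, abs_of_pos hv, abs_of_pos (by nlinarith)]; nlinarith
    have hprod : (c / 4) ^ 2 ≤ ((|u| + |v|) / 2) ^ 2 := by
      have : c ^ 2 / 16 ≤ |u| * |v| := by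
        rw [← abs_mul, abs_of_neg huv_neg]; nlinarith
      nlinarith [sq_nonneg (|u| - |v|)]
    exact ((pow_le_pow_iff_left₀ (by positivity) (by positivity) two_ne_zero).mp hprod).trans hsum

lemma eventually_quarter_le_norm_hwDenom {γ a b : ℝ} (hc : 0 < b - a - γ ^ 2) :
    ∀ᶠ lam : ℝ in atTop, ∀ u v : ℝ,
      (b - a - γ ^ 2) / 4 ≤ ‖hwDenom γ lam (a + u * I) (b + v * I)‖ := by
  have hp : Tendsto (fun lam : ℝ => lam⁻¹ * γ) atTop (𝓝 0) := by
    simpa using (tendsto_inv_atTop_zero (𝕜 := ℝ)).mul_const γ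
  have hq : Tendsto (fun lam : ℝ => lam⁻¹ ^ 2) atTop (𝓝 0) := by
    simpa using (tendsto_inv_atTop_zero (𝕜 := ℝ)).pow 2
  have hqc := (hq.mul_const (b - a - γ ^ 2)).eventually_le_const (u := 4) (by simp)
  have hpq := ((hp.mul_const (a + b)).add (hq.mul_const (a * b))).eventually_le_const
    (u := (b - a - γ ^ 2) / 2) (by simpa using hc)
  have hα := ((tendsto_const_nhds (x := (1 : ℝ))).sub hp |>.sub (hq.mul_const a))
    |>.eventually_const_le (u := 1 / 2) (by norm_num)
  have hβ := ((tendsto_const_nhds (x := (1 : ℝ))).add hp |>.add (hq.mul_const b))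
    |>.eventually_const_le (u := 1 / 2) (by norm_num)
  filter_upwards [hqc, hpq, hα, hβ] with lam hqc hpq hα hβ u v
  rw [hwDenom_eq_pairDenom]
  exact quarter_le_norm_pairDenom hc (sq_nonneg _) hqc hpq hα hβ u v

lemma eventually_norm_mul_div_add_le_two {γ : ℝ} (hγ : 0 < γ) (a : ℝ) :
    ∀ᶠ lam : ℝ in atTop, ∀ u : ℝ, (γ : ℂ) * lam + (a + u * I) ≠ 0 ∧
      ‖(γ : ℂ) * lam / ((γ : ℂ) * lam + (a + u * I))‖ ≤ 2 := by
  filter_upwards [eventually_gt_atTop 0, eventually_ge_atTop (-2 * a / γ)] with lam hlam hla u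
  have hγlam : 0 < γ * lam := mul_pos hγ hlam
  have hre : ((γ : ℂ) * lam + (a + u * I)).re = γ * lam + a := by simp
  have hhalf : γ * lam / 2 ≤ ‖(γ : ℂ) * lam + (a + u * I)‖ := by
    rw [div_le_iff₀ hγ] at hla
    linarith [Complex.re_le_norm ((γ : ℂ) * lam + (a + u * I))]
  have hpos : 0 < ‖(γ : ℂ) * lam + (a + u * I)‖ := by linarith
  have hnum : ‖(γ : ℂ) * lam‖ = γ * lam := by
    rw [← ofReal_mul, Complex.norm_of_nonneg hγlam.le]
  refine ⟨norm_pos_iff.mp hpos, ?_⟩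
  rw [norm_div, div_le_iff₀ hpos, hnum]
  linarith

noncomputable def heatFactor (t x : ℝ) (z : ℂ) : ℂ :=
  Complex.exp ((t : ℂ) * z ^ 2 / 2 - (x : ℂ) * z)

lemma norm_heatFactor (t x r u : ℝ) :
    ‖heatFactor t x (r + u * I)‖ = Real.exp (t * (r ^ 2 - u ^ 2) / 2 - x * r) := by
  rw [heatFactor, Complex.norm_exp]
  congr 1
  simp [sq]

lemma integrable_exp_mul_abs_mul_exp_neg_mul_sq {b : ℝ} (hb : 0 < b) (a : ℝ) :
    Integrable (fun u : ℝ => Real.exp (a * |u|) * Real.exp (-b * u ^ 2)) := by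
  refine ((integrable_exp_neg_mul_sq (half_pos hb)).const_mul (Real.exp (a ^ 2 / (2 * b)))).mono'
    (by fun_prop) (Eventually.of_forall fun u => ?_)
  rw [Real.norm_of_nonneg (by positivity), ← Real.exp_add, ← Real.exp_add]
  refine Real.exp_le_exp.mpr ?_
  -- completing the square: `b/2 u² - a|u| + a²/(2b) = (b|u| - a)² / (2b)`
  have hsq : 0 ≤ (b * |u| - a) ^ 2 / (2 * b) := by positivity
  have : (b * |u| - a) ^ 2 / (2 * b) = b / 2 * u ^ 2 - a * |u| + a ^ 2 / (2 * b) := by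
    field_simp; rw [← sq_abs u]; ring
  nlinarith

lemma integrable_exp_mul_norm_mul_norm_heatFactor {t : ℝ} (ht : 0 < t) {a : ℝ} (ha : 0 ≤ a)
    (x r : ℝ) :
    Integrable fun u : ℝ =>
      Real.exp (a * ‖(r : ℂ) + u * I‖) * ‖heatFactor t x (r + u * I)‖ := by
  refine ((integrable_exp_mul_abs_mul_exp_neg_mul_sq (half_pos ht) a).const_mul
    (Real.exp (a * |r| + t * r ^ 2 / 2 - x * r))).mono'
    (by unfold heatFactor; fun_prop) (Eventually.of_forall fun u => ?_)
  have hz : ‖(r : ℂ) + u * I‖ ≤ |r| + |u| := by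
    simpa using Complex.norm_le_abs_re_add_abs_im ((r : ℂ) + u * I)
  rw [Real.norm_of_nonneg (by positivity), norm_heatFactor, ← Real.exp_add, ← Real.exp_add,
    ← Real.exp_add]
  refine Real.exp_le_exp.mpr ?_
  nlinarith [mul_le_mul_of_nonneg_left hz ha]

lemma norm_sub_le_exp_sum {ι E : Type*} [Fintype ι] [SeminormedAddCommGroup E] (z : ι → E)
    (i j : ι) : ‖z j - z i‖ ≤ Real.exp (2 * ∑ l, ‖z l‖) := by
  have hi := Finset.single_le_sum (fun l _ => norm_nonneg (z l)) (Finset.mem_univ i)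
  have hj := Finset.single_le_sum (fun l _ => norm_nonneg (z l)) (Finset.mem_univ j)
  linarith [norm_sub_le (z j) (z i), Real.add_one_le_exp (2 * ∑ l, ‖z l‖)]

lemma prod_norm_sub_le {ι E : Type*} [Fintype ι] [SeminormedAddCommGroup E]
    (P : Finset (ι × ι)) (z : ι → E) :
    ∏ p ∈ P, ‖z p.2 - z p.1‖ ≤ ∏ j, Real.exp (2 * P.card * ‖z j‖) := by
  calc ∏ p ∈ P, ‖z p.2 - z p.1‖ ≤ ∏ _p ∈ P, Real.exp (2 * ∑ l, ‖z l‖) :=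
        Finset.prod_le_prod (fun _ _ => norm_nonneg _) fun p _ => norm_sub_le_exp_sum z p.1 p.2
    _ = ∏ j, Real.exp (2 * P.card * ‖z j‖) := by
        rw [Finset.prod_const, ← Real.exp_nat_mul, ← Real.exp_sum, Finset.mul_sum,
          Finset.mul_sum]
        simp only [mul_assoc, mul_left_comm]

def ltPairs (k : ℕ) : Finset (Fin k × Fin k) :=
  Finset.univ.filter (fun p : Fin k × Fin k => p.1 < p.2)

def verticalPoint {k : ℕ} (r s : Fin k → ℝ) (j : Fin k) : ℂ :=
  r j + s j * I

-- `F k γ t x r lam` unfolds to `((2π) ^ k)⁻¹ * ∫ s, hwIntegrand k γ t x r lam s`, and `G`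
-- likewise to the integral of `sheIntegrand`.
noncomputable def hwIntegrand (k : ℕ) (γ t : ℝ) (x r : Fin k → ℝ) (lam : ℝ)
    (s : Fin k → ℝ) : ℂ :=
  (∏ p ∈ ltPairs k, (verticalPoint r s p.2 - verticalPoint r s p.1) /
      hwDenom γ lam (verticalPoint r s p.1) (verticalPoint r s p.2)) *
    ∏ j, (γ : ℂ) * lam / ((γ : ℂ) * lam + verticalPoint r s j) *
      heatFactor t (x j) (verticalPoint r s j)

noncomputable def sheIntegrand (k : ℕ) (γ t : ℝ) (x r s : Fin k → ℝ) : ℂ :=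
  (∏ p ∈ ltPairs k, (verticalPoint r s p.2 - verticalPoint r s p.1) /
      (verticalPoint r s p.2 - verticalPoint r s p.1 - (γ : ℂ) ^ 2)) *
    ∏ j, heatFactor t (x j) (verticalPoint r s j)

section Integrand

variable {k : ℕ} {γ t : ℝ} {x r : Fin k → ℝ}

lemma continuous_hwIntegrand {lam : ℝ}
    (hD : ∀ s, ∀ p ∈ ltPairs k,
      hwDenom γ lam (verticalPoint r s p.1) (verticalPoint r s p.2) ≠ 0)
    (hW : ∀ s j, (γ : ℂ) * lam + verticalPoint r s j ≠ 0) :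
    Continuous (hwIntegrand k γ t x r lam) := by
  have hz : ∀ j, Continuous fun s => verticalPoint r s j := fun j => by
    unfold verticalPoint; fun_prop
  unfold hwIntegrand hwDenom heatFactor
  refine Continuous.mul (continuous_finsetProd _ fun p hp => ?_)
    (continuous_finsetProd _ fun j _ => ?_)
  · exact Continuous.div (by fun_prop) (by fun_prop) fun s => hD s p hp
  · exact (Continuous.div (by fun_prop) (by fun_prop) fun s => hW s j).mul (by fun_prop)

lemma tendsto_ofReal_inv_atTop : Tendsto (fun lam : ℝ => ((lam : ℂ))⁻¹) atTop (𝓝 0) := by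
  simpa [Function.comp_def] using
    (continuous_ofReal.tendsto 0).comp (tendsto_inv_atTop_zero (𝕜 := ℝ))

lemma tendsto_hwDenom (γ : ℝ) (z w : ℂ) :
    Tendsto (fun lam => hwDenom γ lam z w) atTop (𝓝 (w - z - (γ : ℂ) ^ 2)) := by
  have h := (tendsto_const_nhds (x := w - z - (γ : ℂ) ^ 2)).sub
    (tendsto_ofReal_inv_atTop.const_mul ((γ : ℂ) * (z + w)))
    |>.sub ((tendsto_ofReal_inv_atTop.pow 2).const_mul (z * w))
  simpa [hwDenom, div_eq_mul_inv] using h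

lemma tendsto_mul_div_mul_add {γ : ℝ} (hγ : γ ≠ 0) (z : ℂ) :
    Tendsto (fun lam : ℝ => (γ : ℂ) * lam / ((γ : ℂ) * lam + z)) atTop (𝓝 1) := by
  have h :=
    ((tendsto_ofReal_inv_atTop.const_mul (z * (γ : ℂ)⁻¹)).const_add 1).inv₀ (by simp)
  rw [mul_zero, add_zero, inv_one] at h
  refine h.congr' ((eventually_ne_atTop 0).mono fun lam hlam => ?_)
  have : (γ : ℂ) * lam ≠ 0 := mul_ne_zero (ofReal_ne_zero.mpr hγ) (ofReal_ne_zero.mpr hlam)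
  rw [mul_assoc, ← mul_inv, ← div_eq_mul_inv, one_add_div this, inv_div]

lemma tendsto_hwIntegrand (hγ : γ ≠ 0) (s : Fin k → ℝ)
    (hc : ∀ p ∈ ltPairs k,
      verticalPoint r s p.2 - verticalPoint r s p.1 - (γ : ℂ) ^ 2 ≠ 0) :
    Tendsto (fun lam => hwIntegrand k γ t x r lam s) atTop (𝓝 (sheIntegrand k γ t x r s)) := by
  refine Tendsto.mul (tendsto_finsetProd _ fun p hp => ?_) ?_
  · exact tendsto_const_nhds.div (tendsto_hwDenom _ _ _) (hc p hp)
  · simpa using tendsto_finsetProd _ fun j _ =>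
      (tendsto_mul_div_mul_add hγ (verticalPoint r s j)).mul_const
        (heatFactor t (x j) (verticalPoint r s j))

lemma norm_hwIntegrand_le {lam : ℝ} {s : Fin k → ℝ} {δ : Fin k × Fin k → ℝ}
    (hD : ∀ p ∈ ltPairs k,
      0 < δ p ∧ δ p ≤ ‖hwDenom γ lam (verticalPoint r s p.1) (verticalPoint r s p.2)‖)
    (hW : ∀ j, ‖(γ : ℂ) * lam / ((γ : ℂ) * lam + verticalPoint r s j)‖ ≤ 2) :
    ‖hwIntegrand k γ t x r lam s‖ ≤ (∏ p ∈ ltPairs k, (δ p)⁻¹) *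
      ∏ j, 2 * (Real.exp (2 * (ltPairs k).card * ‖verticalPoint r s j‖) *
        ‖heatFactor t (x j) (verticalPoint r s j)‖) := by
  have hpair : ∀ p ∈ ltPairs k, ‖(verticalPoint r s p.2 - verticalPoint r s p.1) /
      hwDenom γ lam (verticalPoint r s p.1) (verticalPoint r s p.2)‖ ≤
      (δ p)⁻¹ * ‖verticalPoint r s p.2 - verticalPoint r s p.1‖ := fun p hp => by
    rw [norm_div, div_eq_inv_mul]
    gcongr
    exacts [(hD p hp).1, (hD p hp).2]
  have hweight : ∀ j, ‖(γ : ℂ) * lam / ((γ : ℂ) * lam + verticalPoint r s j) *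
      heatFactor t (x j) (verticalPoint r s j)‖ ≤
      2 * ‖heatFactor t (x j) (verticalPoint r s j)‖ :=
    fun j => by rw [norm_mul]; gcongr; exact hW j
  have hδ : ∀ p ∈ ltPairs k, 0 ≤ (δ p)⁻¹ := fun p hp => inv_nonneg.mpr (hD p hp).1.le
  rw [hwIntegrand, norm_mul, norm_prod, norm_prod]
  calc _ ≤ (∏ p ∈ ltPairs k,
          (δ p)⁻¹ * ‖verticalPoint r s p.2 - verticalPoint r s p.1‖) *
        ∏ j, 2 * ‖heatFactor t (x j) (verticalPoint r s j)‖ :=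
        mul_le_mul (Finset.prod_le_prod (fun _ _ => norm_nonneg _) hpair)
          (Finset.prod_le_prod (fun _ _ => norm_nonneg _) fun j _ => hweight j)
          (by positivity) (Finset.prod_nonneg fun p hp => mul_nonneg (hδ p hp) (norm_nonneg _))
    _ ≤ (∏ p ∈ ltPairs k, (δ p)⁻¹) *
        ((∏ j, Real.exp (2 * (ltPairs k).card * ‖verticalPoint r s j‖)) *
          ∏ j, 2 * ‖heatFactor t (x j) (verticalPoint r s j)‖) := by
        rw [Finset.prod_mul_distrib, mul_assoc]
        gcongr
        · exact Finset.prod_nonneg hδ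
        · exact prod_norm_sub_le _ _
    _ = _ := by
        rw [← Finset.prod_mul_distrib]
        simp only [mul_left_comm]

lemma eventually_hwIntegrand_bounds (hγ : 0 < γ)
    (hc : ∀ p ∈ ltPairs k, 0 < r p.2 - r p.1 - γ ^ 2) :
    ∀ᶠ lam : ℝ in atTop, ∀ s : Fin k → ℝ,
      (∀ p ∈ ltPairs k, (r p.2 - r p.1 - γ ^ 2) / 4 ≤
        ‖hwDenom γ lam (verticalPoint r s p.1) (verticalPoint r s p.2)‖) ∧
      ∀ j, (γ : ℂ) * lam + verticalPoint r s j ≠ 0 ∧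
        ‖(γ : ℂ) * lam / ((γ : ℂ) * lam + verticalPoint r s j)‖ ≤ 2 := by
  have hD := (eventually_all_finset (ltPairs k)).mpr fun p hp =>
    eventually_quarter_le_norm_hwDenom (hc p hp)
  have hW := eventually_all.mpr fun j => eventually_norm_mul_div_add_le_two hγ (r j)
  filter_upwards [hD, hW] with lam hD hW s
  exact ⟨fun p hp => hD p hp (s p.1) (s p.2), fun j => hW j (s j)⟩

lemma tendsto_integral_hwIntegrand (hγ : 0 < γ) (ht : 0 < t)
    (hc : ∀ p ∈ ltPairs k, 0 < r p.2 - r p.1 - γ ^ 2) :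
    Tendsto (fun lam => ∫ s, hwIntegrand k γ t x r lam s) atTop
      (𝓝 (∫ s, sheIntegrand k γ t x r s)) := by
  have hev := eventually_hwIntegrand_bounds hγ hc
  have hquarter : ∀ p ∈ ltPairs k, 0 < (r p.2 - r p.1 - γ ^ 2) / 4 :=
    fun p hp => by linarith [hc p hp]
  refine tendsto_integral_filter_of_dominated_convergence
    (fun s => (∏ p ∈ ltPairs k, ((r p.2 - r p.1 - γ ^ 2) / 4)⁻¹) *
      ∏ j, 2 * (Real.exp (2 * (ltPairs k).card * ‖verticalPoint r s j‖) *
        ‖heatFactor t (x j) (verticalPoint r s j)‖)) ?_ ?_ ?_ ?_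
  · filter_upwards [hev] with lam h
    refine (continuous_hwIntegrand (fun s p hp => ?_) fun s j => ((h s).2 j).1).aestronglyMeasurable
    exact norm_pos_iff.mp ((hquarter p hp).trans_le ((h s).1 p hp))
  · filter_upwards [hev] with lam h
    exact ae_of_all _ fun s =>
      norm_hwIntegrand_le (fun p hp => ⟨hquarter p hp, (h s).1 p hp⟩) fun j => ((h s).2 j).2
  · refine (Integrable.fintype_prod (f := fun j (u : ℝ) => 2 * (Real.exp
      (2 * (ltPairs k).card * ‖(r j : ℂ) + u * I‖) * ‖heatFactor t (x j) (r j + u * I)‖))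
      fun j => ?_).const_mul _
    exact (integrable_exp_mul_norm_mul_norm_heatFactor ht (by positivity) _ _).const_mul 2
  · refine ae_of_all _ fun s => tendsto_hwIntegrand hγ.ne' s fun p hp h0 => ?_
    have hre : (verticalPoint r s p.2 - verticalPoint r s p.1 - (γ : ℂ) ^ 2).re =
        r p.2 - r p.1 - γ ^ 2 := by
      simp [verticalPoint, ← ofReal_pow]
    rw [h0, zero_re] at hre
    linarith [hc p hp]

end Integrand

theorem F_tendsto_G_general (k : ℕ) (γ t : ℝ) (hγ : 0 < γ) (ht : 0 < t)
    (x r : Fin k → ℝ)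
    (hstep : ∀ i : ℕ, ∀ h : i + 1 < k,
      r ⟨i, Nat.lt_of_succ_lt h⟩ + γ ^ 2 < r ⟨i + 1, h⟩) :
    (∀ᶠ lam : ℝ in atTop, ∀ s : Fin k → ℝ,
      (∀ A B : Fin k, A < B →
        (((r B : ℂ) + (s B : ℂ) * Complex.I) - ((r A : ℂ) + (s A : ℂ) * Complex.I))
          - (γ : ℂ) ^ 2
          - (γ : ℂ) * (((r A : ℂ) + (s A : ℂ) * Complex.I)
              + ((r B : ℂ) + (s B : ℂ) * Complex.I)) / (lam : ℂ)
          - ((r A : ℂ) + (s A : ℂ) * Complex.I)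
              * ((r B : ℂ) + (s B : ℂ) * Complex.I) / (lam : ℂ) ^ 2 ≠ 0) ∧
      (∀ j : Fin k, (γ : ℂ) * (lam : ℂ) + ((r j : ℂ) + (s j : ℂ) * Complex.I) ≠ 0)) ∧
    Tendsto (F k γ t x r) atTop (nhds (G k γ t x r)) := by
  have hc : ∀ p ∈ ltPairs k, 0 < r p.2 - r p.1 - γ ^ 2 := fun p hp => by
    linarith [Fin.add_lt_of_forall_add_lt_succ (sq_nonneg γ) hstep (Finset.mem_filter.mp hp).2]
  refine ⟨?_, (tendsto_integral_hwIntegrand hγ ht hc).const_mul _⟩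
  filter_upwards [eventually_hwIntegrand_bounds hγ hc] with lam h s
  refine ⟨fun A B hAB => ?_, fun j => ((h s).2 j).1⟩
  have hAB' : (A, B) ∈ ltPairs k := Finset.mem_filter.mpr ⟨Finset.mem_univ _, hAB⟩
  have hquarter : 0 < (r B - r A - γ ^ 2) / 4 := by linarith [hc _ hAB']
  exact norm_pos_iff.mp (hquarter.trans_le ((h s).1 _ hAB'))

/-- For sufficiently large `λ` the integrand of `F(λ)` has nonvanishing denominators, and
`F(λ)` converges as `λ → ∞` to the moment formula `G` of the multiplicative-noise
stochastic heat equation. -/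
theorem F_tendsto_G (k : ℕ) (hk : 1 ≤ k) (γ t : ℝ) (hγ : 0 < γ) (ht : 0 < t)
    (x r : Fin k → ℝ) (hr1 : 0 < r ⟨0, hk⟩)
    (hstep : ∀ i : ℕ, ∀ h : i + 1 < k,
      r ⟨i, Nat.lt_of_succ_lt h⟩ + γ ^ 2 < r ⟨i + 1, h⟩) :
    (∀ᶠ lam : ℝ in atTop, ∀ s : Fin k → ℝ,
      (∀ A B : Fin k, A < B →
        (((r B : ℂ) + (s B : ℂ) * Complex.I) - ((r A : ℂ) + (s A : ℂ) * Complex.I))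
          - (γ : ℂ) ^ 2
          - (γ : ℂ) * (((r A : ℂ) + (s A : ℂ) * Complex.I)
              + ((r B : ℂ) + (s B : ℂ) * Complex.I)) / (lam : ℂ)
          - ((r A : ℂ) + (s A : ℂ) * Complex.I)
              * ((r B : ℂ) + (s B : ℂ) * Complex.I) / (lam : ℂ) ^ 2 ≠ 0) ∧
      (∀ j : Fin k, (γ : ℂ) * (lam : ℂ) + ((r j : ℂ) + (s j : ℂ) * Complex.I) ≠ 0)) ∧
    Tendsto (F k γ t x r) atTop (nhds (G k γ t x r)) :=
  F_tendsto_G_general k γ t hγ ht x r hstep
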